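/- arXiv:0810.0633 — 2 statements merged into one kernel-verified Lean document; each statement's English description precedes it below -/
import Mathlib

section
/- Let R be a quasiorder on U. In the complete lattice RS of rough sets, the pseudocomplement of the rough set A(X) = (X^▼, X^▲) is A(((X^▲)^△)^c): that is, A(X) ∧ A(((X^▲)^△)^c) = (∅, ∅), and whenever A(X) ∧ A(Y) = (∅, ∅), we have A(Y) ≤ A(((X^▲)^△)^c). -/
/-! The upper approximations of `X` and `Y` are disjoint exactly when no point of `Y` is seen,
along the converse of `R`, from `X^▲`; that is, when `Y ⊆ ((X^▲)^△)ᶜ`. So `((X^▲)^△)ᶜ` is the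
largest set whose upper approximation misses `X^▲`, and monotonicity of both approximations
turns this into the pseudocomplement property. Since `X^▼ ⊆ X ⊆ X^▲` for reflexive `R`,
disjointness of the upper approximations implies that of the lower ones. -/

variable {U : Type*}

/-- Lower approximation. -/
def low (R : U → U → Prop) (X : Set U) : Set U := {x | ∀ y, R x y → y ∈ X}

/-- Upper approximation. -/
def upp (R : U → U → Prop) (X : Set U) : Set U := {x | ∃ y, R x y ∧ y ∈ X}

section Approximation

variable (R : U → U → Prop)

theorem low_mono : Monotone (low R) :=
  fun _ _ hXY _ hx y hxy => hXY (hx y hxy)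

theorem upp_mono : Monotone (upp R) :=
  fun _ _ hXY _ ⟨y, hxy, hy⟩ => ⟨y, hxy, hXY hy⟩

variable {R}

theorem low_subset_upp (hrefl : ∀ x, R x x) (X : Set U) : low R X ⊆ upp R X :=
  fun x hx => ⟨x, hrefl x, hx x (hrefl x)⟩

theorem low_inter_low_eq_empty_of_upp (hrefl : ∀ x, R x x) {X Y : Set U}
    (h : upp R X ∩ upp R Y = ∅) : low R X ∩ low R Y = ∅ :=
  Set.subset_empty_iff.mp <| h ▸ Set.inter_subset_inter (low_subset_upp hrefl X)
    (low_subset_upp hrefl Y)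

variable (R)

theorem upp_inter_upp_eq_empty_iff (X Y : Set U) :
    upp R X ∩ upp R Y = ∅ ↔ Y ⊆ (upp (fun a b => R b a) (upp R X))ᶜ := by
  simp only [Set.eq_empty_iff_forall_notMem, Set.subset_def, Set.mem_inter_iff,
    Set.mem_compl_iff, upp, Set.mem_ofPred_eq]
  constructor
  · rintro h y hy ⟨w, hwy, hw⟩
    exact h w ⟨hw, y, hwy, hy⟩
  · rintro h w ⟨hw, y, hwy, hy⟩
    exact h y hy ⟨w, hwy, hw⟩

end Approximation

theorem pseudocomplement_general (R : U → U → Prop)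
    (hrefl : Reflexive R) (X : Set U) :
    (low R X ∩ low R (upp (fun a b => R b a) (upp R X))ᶜ = ∅ ∧
      upp R X ∩ upp R (upp (fun a b => R b a) (upp R X))ᶜ = ∅) ∧
    ∀ Y : Set U, (low R X ∩ low R Y = ∅ ∧ upp R X ∩ upp R Y = ∅) →
      low R Y ⊆ low R (upp (fun a b => R b a) (upp R X))ᶜ ∧
      upp R Y ⊆ upp R (upp (fun a b => R b a) (upp R X))ᶜ := by
  have hupp := (upp_inter_upp_eq_empty_iff R X _).mpr subset_rfl
  refine ⟨⟨low_inter_low_eq_empty_of_upp hrefl hupp, hupp⟩, fun Y ⟨_, hY⟩ => ?_⟩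
  have hYZ := (upp_inter_upp_eq_empty_iff R X Y).mp hY
  exact ⟨low_mono R hYZ, upp_mono R hYZ⟩

theorem pseudocomplement (R : U → U → Prop)
    (hrefl : Reflexive R) (htrans : Transitive R) (X : Set U) :
    (low R X ∩ low R (upp (fun a b => R b a) (upp R X))ᶜ = ∅ ∧
      upp R X ∩ upp R (upp (fun a b => R b a) (upp R X))ᶜ = ∅) ∧
    ∀ Y : Set U, (low R X ∩ low R Y = ∅ ∧ upp R X ∩ upp R Y = ∅) →
      low R Y ⊆ low R (upp (fun a b => R b a) (upp R X))ᶜ ∧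
      upp R Y ⊆ upp R (upp (fun a b => R b a) (upp R X))ᶜ :=
  pseudocomplement_general R hrefl X
end

section
/- Let R be a quasiorder on U and X ⊆ U. The following are equivalent: (i) there exists Y ⊆ U with A(X) ∧ A(Y) = (∅,∅) and A(X) ∨ A(Y) = (U,U) (A(X) is complemented in RS); (ii) X^▼ = X = X^▲ (A(X) is exact); (iii) X is a union of equivalence classes of the smallest equivalence relation containing R. -/
def IsSaturated (R : U → U → Prop) (X : Set U) : Prop :=
  ∀ ⦃x y⦄, R x y → (x ∈ X ↔ y ∈ X)

section Approximations

variable {R : U → U → Prop} {X Y : Set U}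

theorem low_subset (hR : Reflexive R) (X : Set U) : low R X ⊆ X :=
  fun x hx => hx x (hR x)

theorem subset_upp (hR : Reflexive R) (X : Set U) : X ⊆ upp R X :=
  fun x hx => ⟨x, hR x, hx⟩

theorem IsSaturated.compl (hX : IsSaturated R X) : IsSaturated R Xᶜ :=
  fun _ _ hxy => not_congr (hX hxy)

theorem IsSaturated.low_eq (hR : Reflexive R) (hX : IsSaturated R X) : low R X = X :=
  (low_subset hR X).antisymm fun _ hx _ hxy => (hX hxy).1 hx

theorem IsSaturated.upp_eq (hR : Reflexive R) (hX : IsSaturated R X) : upp R X = X :=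
  Set.Subset.antisymm (fun _ ⟨_, hxy, hy⟩ => (hX hxy).2 hy) (subset_upp hR X)

theorem low_eq_and_upp_eq_iff (hR : Reflexive R) :
    low R X = X ∧ upp R X = X ↔ IsSaturated R X := by
  refine ⟨fun ⟨hlow, hupp⟩ x y hxy => ⟨fun hx => ?_, fun hy => ?_⟩,
    fun hX => ⟨hX.low_eq hR, hX.upp_eq hR⟩⟩
  · rw [← hlow] at hx
    exact hx y hxy
  · rw [← hupp]
    exact ⟨y, hxy, hy⟩

theorem IsSaturated.mem_iff_of_eqvGen (hX : IsSaturated R X) {a b : U}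
    (hab : Relation.EqvGen R a b) : a ∈ X ↔ b ∈ X := by
  induction hab with
  | rel x y hxy => exact hX hxy
  | refl x => exact Iff.rfl
  | symm x y _ ih => exact ih.symm
  | trans x y z _ _ ih₁ ih₂ => exact ih₁.trans ih₂

theorem isSaturated_iff_exists_eq_sUnion_eqvGen_classes :
    IsSaturated R X ↔ ∃ H : Set (Set U), (∀ C ∈ H, ∃ a, C = {y | Relation.EqvGen R a y}) ∧
      X = ⋃₀ H := by
  constructor
  · intro hX
    refine ⟨(fun a => {y | Relation.EqvGen R a y}) '' X, ?_, ?_⟩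
    · rintro C ⟨a, -, rfl⟩
      exact ⟨a, rfl⟩
    · ext x
      refine ⟨fun hx => ⟨_, ⟨x, hx, rfl⟩, Relation.EqvGen.refl x⟩, ?_⟩
      rintro ⟨C, ⟨a, ha, rfl⟩, hax⟩
      exact (hX.mem_iff_of_eqvGen hax).1 ha
  · rintro ⟨H, hH, rfl⟩ x y hxy
    have hxy' := Relation.EqvGen.rel x y hxy
    constructor
    · rintro ⟨C, hC, hx⟩
      obtain ⟨a, rfl⟩ := hH C hC
      exact ⟨_, hC, hx.trans _ _ _ hxy'⟩
    · rintro ⟨C, hC, hy⟩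
      obtain ⟨a, rfl⟩ := hH C hC
      exact ⟨_, hC, hy.trans _ _ _ hxy'.symm⟩

theorem isSaturated_of_upp_inter_eq_empty_of_low_union_eq_univ (hR : Reflexive R)
    (hupp : upp R X ∩ upp R Y = ∅) (hlow : low R X ∪ low R Y = Set.univ) :
    IsSaturated R X := by
  have hdisj : ∀ x ∈ upp R X, x ∉ low R Y := fun x hxX hxY =>
    hupp.subset ⟨hxX, subset_upp hR Y (low_subset hR Y hxY)⟩
  have hmem_low : ∀ x ∈ upp R X, x ∈ low R X := fun x hx =>
    (hlow.symm.subset (Set.mem_univ x)).resolve_right (hdisj x hx)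
  intro x y hxy
  exact ⟨fun hx => hmem_low x (subset_upp hR X hx) y hxy,
    fun hy => low_subset hR X (hmem_low x ⟨y, hxy, hy⟩)⟩

theorem IsSaturated.complemented_by_compl (hR : Reflexive R) (hX : IsSaturated R X) :
    (low R X ∩ low R Xᶜ = ∅ ∧ upp R X ∩ upp R Xᶜ = ∅) ∧
      (low R X ∪ low R Xᶜ = Set.univ ∧ upp R X ∪ upp R Xᶜ = Set.univ) := by
  simp only [hX.low_eq hR, hX.upp_eq hR, hX.compl.low_eq hR, hX.compl.upp_eq hR,
    Set.inter_compl_self, Set.union_compl_self, and_self]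

end Approximations

theorem complemented_iff_exact_iff_union_of_classes_general (R : U → U → Prop)
    (hrefl : Reflexive R) (X : Set U) :
    ((∃ Y : Set U, (low R X ∩ low R Y = ∅ ∧ upp R X ∩ upp R Y = ∅) ∧
        (low R X ∪ low R Y = Set.univ ∧ upp R X ∪ upp R Y = Set.univ)) ↔
      (low R X = X ∧ upp R X = X)) ∧
    ((low R X = X ∧ upp R X = X) ↔
      ∃ H : Set (Set U), (∀ C ∈ H, ∃ a, C = {y | Relation.EqvGen R a y}) ∧
        X = ⋃₀ H) := by
  rw [low_eq_and_upp_eq_iff hrefl]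
  refine ⟨⟨?_, fun hX => ⟨Xᶜ, hX.complemented_by_compl hrefl⟩⟩,
    isSaturated_iff_exists_eq_sUnion_eqvGen_classes⟩
  rintro ⟨Y, ⟨-, hupp⟩, hlow, -⟩
  exact isSaturated_of_upp_inter_eq_empty_of_low_union_eq_univ hrefl hupp hlow

theorem complemented_iff_exact_iff_union_of_classes (R : U → U → Prop)
    (hrefl : Reflexive R) (htrans : Transitive R) (X : Set U) :
    ((∃ Y : Set U, (low R X ∩ low R Y = ∅ ∧ upp R X ∩ upp R Y = ∅) ∧
        (low R X ∪ low R Y = Set.univ ∧ upp R X ∪ upp R Y = Set.univ)) ↔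
      (low R X = X ∧ upp R X = X)) ∧
    ((low R X = X ∧ upp R X = X) ↔
      ∃ H : Set (Set U), (∀ C ∈ H, ∃ a, C = {y | Relation.EqvGen R a y}) ∧
        X = ⋃₀ H) :=
  complemented_iff_exact_iff_union_of_classes_general R hrefl X
end
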